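/- The inverse-Gaussian densities are closed under convolution: for 0<s<t<T and all z>0, ∫₀^z q_{T−t}(y) q_{t−s}(z−y) dy = q_{T−s}(z). -/

import Mathlib

open MeasureTheory Real Set

noncomputable def igDensity (c γ t x : ℝ) : ℝ :=
  if 0 < x then c * t / Real.sqrt (2 * Real.pi) * x ^ (-(3 : ℝ) / 2) *
    Real.exp (-(γ ^ 2 / (2 * x)) * (x - c * t / γ) ^ 2) else 0


lemma gauss_half : ∫ x : ℝ, Real.exp (-x^2/2) = Real.sqrt (2*π) := by
  have h := integral_gaussian (1/2)
  have e1 : (fun x : ℝ => Real.exp (-(1/2) * x^2)) = fun x : ℝ => Real.exp (-x^2/2) := by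
    funext x; ring_nf
  rw [e1] at h
  rw [h, show π / (1/2) = 2*π by ring]

lemma rpow_neg_three_half {x : ℝ} (hx : 0 < x) :
    x ^ (-(3:ℝ)/2) = (x * Real.sqrt x)⁻¹ := by
  rw [show (-(3:ℝ)/2) = -(3/2 : ℝ) by norm_num, Real.rpow_neg hx.le]
  congr 1
  rw [show (3/2 : ℝ) = 1 + 1/2 by norm_num, Real.rpow_add hx, Real.rpow_one,
    ← Real.sqrt_eq_rpow]

-- total integral after substitution w = v - θ/v
lemma J_total {θ : ℝ} (hθ : 0 < θ) :
    ∫ v in Set.Ioi (0:ℝ), (1 + θ/v^2) * Real.exp (-(v - θ/v)^2/2) = Real.sqrt (2*π) := by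
  set f : ℝ → ℝ := fun v => v - θ/v with hf
  set f' : ℝ → ℝ := fun v => 1 + θ/v^2 with hf'
  have hderiv : ∀ v ∈ Set.Ioi (0:ℝ), HasDerivWithinAt f (f' v) (Set.Ioi 0) v := by
    intro v hv
    have hv0 : v ≠ 0 := ne_of_gt hv
    have h1 : HasDerivAt f (1 - θ * (-(v^2)⁻¹)) v := by
      have h := (hasDerivAt_id' v).sub (((hasDerivAt_inv hv0)).const_mul θ)
      simp only [hf, div_eq_mul_inv]; exact h
    have : (1 - θ * (-(v^2)⁻¹)) = f' v := by
      simp only [hf', div_eq_mul_inv]; ring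
    exact (this ▸ h1).hasDerivWithinAt
  have hinj : Set.InjOn f (Set.Ioi 0) := by
    have hmono : StrictMonoOn f (Set.Ioi 0) := by
      intro a ha b hb hab
      simp only [hf]
      have : θ/b < θ/a := by
        apply div_lt_div_of_pos_left hθ (Set.mem_Ioi.mp ha) hab
      linarith
    exact hmono.injOn
  have himg : f '' Set.Ioi 0 = Set.univ := by
    apply Set.eq_univ_of_forall
    intro w
    refine ⟨(w + Real.sqrt (w^2 + 4*θ))/2, ?_, ?_⟩
    · have hs : |w| < Real.sqrt (w^2 + 4*θ) := by
        have : w^2 < w^2 + 4*θ := by linarith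
        calc |w| = Real.sqrt (w^2) := (Real.sqrt_sq_eq_abs w).symm
        _ < Real.sqrt (w^2 + 4*θ) := Real.sqrt_lt_sqrt (sq_nonneg w) this
      have := neg_abs_le w
      simp only [Set.mem_Ioi]
      nlinarith [abs_nonneg w]
    · have hs2 : Real.sqrt (w^2 + 4*θ) ^ 2 = w^2 + 4*θ :=
        Real.sq_sqrt (by positivity)
      have hvpos : 0 < (w + Real.sqrt (w^2 + 4*θ))/2 := by
        have hs : |w| < Real.sqrt (w^2 + 4*θ) := by
          have : w^2 < w^2 + 4*θ := by linarith
          calc |w| = Real.sqrt (w^2) := (Real.sqrt_sq_eq_abs w).symm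
          _ < Real.sqrt (w^2 + 4*θ) := Real.sqrt_lt_sqrt (sq_nonneg w) this
        have := neg_abs_le w
        nlinarith [abs_nonneg w]
      simp only [hf]
      have hne : w + Real.sqrt (w^2 + 4*θ) ≠ 0 := by
        intro h; rw [h] at hvpos; simp at hvpos
      field_simp
      nlinarith [hs2]
  have key := integral_image_eq_integral_abs_deriv_smul measurableSet_Ioi hderiv hinj
    (fun w => Real.exp (-w^2/2))
  rw [himg] at key
  rw [MeasureTheory.setIntegral_univ] at key
  rw [gauss_half] at key
  rw [key]
  apply MeasureTheory.setIntegral_congr_fun measurableSet_Ioi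
  intro v hv
  have hv0 : (0:ℝ) < v := hv
  have : |f' v| = 1 + θ/v^2 := by
    rw [abs_of_pos]; simp only [hf']; positivity
  simp only [smul_eq_mul, this, hf]

lemma J_swap {θ : ℝ} (hθ : 0 < θ) :
    ∫ v in Set.Ioi (0:ℝ), (θ/v^2) * Real.exp (-(v - θ/v)^2/2)
      = ∫ v in Set.Ioi (0:ℝ), Real.exp (-(v - θ/v)^2/2) := by
  set f : ℝ → ℝ := fun v => θ/v with hf
  set f' : ℝ → ℝ := fun v => -θ/v^2 with hf'
  have hderiv : ∀ v ∈ Set.Ioi (0:ℝ), HasDerivWithinAt f (f' v) (Set.Ioi 0) v := by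
    intro v hv
    have hv0 : v ≠ 0 := ne_of_gt hv
    have h1 : HasDerivAt f (θ * (-(v^2)⁻¹)) v := by
      have h := ((hasDerivAt_inv hv0)).const_mul θ
      simp only [hf, div_eq_mul_inv]; exact h
    have : θ * (-(v^2)⁻¹) = f' v := by
      simp only [hf']; field_simp
    exact (this ▸ h1).hasDerivWithinAt
  have hinj : Set.InjOn f (Set.Ioi 0) := by
    intro a ha b hb hab
    simp only [hf] at hab
    have ha0 : a ≠ 0 := ne_of_gt ha
    have hb0 : b ≠ 0 := ne_of_gt hb
    field_simp at hab
    exact hab.symm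
  have himg : f '' Set.Ioi 0 = Set.Ioi 0 := by
    ext y
    constructor
    · rintro ⟨v, hv, rfl⟩
      have : (0:ℝ) < v := hv
      simp only [hf, Set.mem_Ioi]; positivity
    · intro hy
      have hy0 : (0:ℝ) < y := hy
      exact ⟨θ/y, by simp only [Set.mem_Ioi]; positivity, by
        simp only [hf]; field_simp⟩
  have key := integral_image_eq_integral_abs_deriv_smul measurableSet_Ioi hderiv hinj
    (fun w => Real.exp (-(w - θ/w)^2/2))
  rw [himg] at key
  rw [key]
  apply MeasureTheory.setIntegral_congr_fun measurableSet_Ioi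
  intro v hv
  have hv0 : (0:ℝ) < v := hv
  have habs : |f' v| = θ/v^2 := by
    simp only [hf']
    rw [neg_div, abs_of_nonpos (neg_nonpos.mpr (by positivity))]; ring
  simp only [smul_eq_mul, habs, hf]
  congr 2
  have h1 : θ / (θ / v) = v := by field_simp
  rw [h1]; ring

lemma J_all {θ : ℝ} (hθ : 0 < θ) :
    IntegrableOn (fun v => Real.exp (-(v - θ/v)^2/2)) (Set.Ioi (0:ℝ)) ∧
    IntegrableOn (fun v => (θ/v^2) * Real.exp (-(v - θ/v)^2/2)) (Set.Ioi (0:ℝ)) ∧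
    (∫ v in Set.Ioi (0:ℝ), Real.exp (-(v - θ/v)^2/2)) = Real.sqrt (2*π)/2 ∧
    (∫ v in Set.Ioi (0:ℝ), (θ/v^2) * Real.exp (-(v - θ/v)^2/2)) = Real.sqrt (2*π)/2 := by
  have hcont1 : ContinuousOn (fun v : ℝ => v - θ/v) (Set.Ioi 0) :=
    continuousOn_id.sub (continuousOn_const.div continuousOn_id fun x hx => ne_of_gt hx)
  have hcontE : ContinuousOn (fun v : ℝ => Real.exp (-(v - θ/v)^2/2)) (Set.Ioi 0) :=
    Real.continuous_exp.comp_continuousOn (((hcont1.pow 2).neg).div_const 2)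
  have hcontE2 : ContinuousOn (fun v : ℝ => (θ/v^2) * Real.exp (-(v - θ/v)^2/2)) (Set.Ioi 0) :=
    (continuousOn_const.div (continuousOn_id.pow 2) fun x hx => by
      have : (0:ℝ) < x := hx; exact pow_ne_zero 2 this.ne').mul hcontE
  -- integrability of total via change of variables
  set f : ℝ → ℝ := fun v => v - θ/v with hf
  set f' : ℝ → ℝ := fun v => 1 + θ/v^2 with hf'
  have hderiv : ∀ v ∈ Set.Ioi (0:ℝ), HasDerivWithinAt f (f' v) (Set.Ioi 0) v := by
    intro v hv
    have hv0 : v ≠ 0 := ne_of_gt hv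
    have h1 : HasDerivAt f (1 - θ * (-(v^2)⁻¹)) v := by
      have h := (hasDerivAt_id' v).sub (((hasDerivAt_inv hv0)).const_mul θ)
      simp only [hf, div_eq_mul_inv]; exact h
    have : (1 - θ * (-(v^2)⁻¹)) = f' v := by
      simp only [hf', div_eq_mul_inv]; ring
    exact (this ▸ h1).hasDerivWithinAt
  have hinj : Set.InjOn f (Set.Ioi 0) := by
    have hmono : StrictMonoOn f (Set.Ioi 0) := by
      intro a ha b hb hab
      simp only [hf]
      have : θ/b < θ/a := div_lt_div_of_pos_left hθ (Set.mem_Ioi.mp ha) hab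
      linarith
    exact hmono.injOn
  have hintG : Integrable (fun w : ℝ => Real.exp (-w^2/2)) := by
    have := integrable_exp_neg_mul_sq (show (0:ℝ) < 1/2 by norm_num)
    have e1 : (fun x : ℝ => Real.exp (-(1/2) * x^2)) = fun x : ℝ => Real.exp (-x^2/2) := by
      funext x; ring_nf
    rwa [e1] at this
  have himg : f '' Set.Ioi 0 = Set.univ := by
    apply Set.eq_univ_of_forall
    intro w
    have hs : |w| < Real.sqrt (w^2 + 4*θ) := by
      have : w^2 < w^2 + 4*θ := by linarith
      calc |w| = Real.sqrt (w^2) := (Real.sqrt_sq_eq_abs w).symm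
      _ < Real.sqrt (w^2 + 4*θ) := Real.sqrt_lt_sqrt (sq_nonneg w) this
    have hvpos : 0 < (w + Real.sqrt (w^2 + 4*θ))/2 := by
      have := neg_abs_le w
      nlinarith [abs_nonneg w]
    refine ⟨(w + Real.sqrt (w^2 + 4*θ))/2, hvpos, ?_⟩
    have hs2 : Real.sqrt (w^2 + 4*θ) ^ 2 = w^2 + 4*θ := Real.sq_sqrt (by positivity)
    simp only [hf]
    have hne : w + Real.sqrt (w^2 + 4*θ) ≠ 0 := by
      intro h; rw [h] at hvpos; simp at hvpos
    field_simp
    nlinarith [hs2]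
  have htot0 : IntegrableOn (fun v => |f' v| • (fun w : ℝ => Real.exp (-w^2/2)) (f v))
      (Set.Ioi 0) := by
    exact (integrableOn_image_iff_integrableOn_abs_deriv_smul measurableSet_Ioi hderiv hinj
      (fun w : ℝ => Real.exp (-w^2/2))).mp (by rw [himg]; exact hintG.integrableOn)
  have htot : IntegrableOn (fun v => (1 + θ/v^2) * Real.exp (-(v - θ/v)^2/2)) (Set.Ioi 0) := by
    apply htot0.congr_fun _ measurableSet_Ioi
    intro v hv
    have hv0 : (0:ℝ) < v := hv
    have : |f' v| = 1 + θ/v^2 := by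
      rw [abs_of_pos]; simp only [hf']; positivity
    simp only [smul_eq_mul, this, hf]
  have hbound : ∀ v ∈ Set.Ioi (0:ℝ), (0:ℝ) ≤ Real.exp (-(v - θ/v)^2/2) ∧ (0:ℝ) ≤ θ/v^2 := by
    intro v hv
    have hv0 : (0:ℝ) < v := hv
    exact ⟨(Real.exp_pos _).le, by positivity⟩
  have hE : IntegrableOn (fun v => Real.exp (-(v - θ/v)^2/2)) (Set.Ioi (0:ℝ)) := by
    apply Integrable.mono' htot (hcontE.aestronglyMeasurable measurableSet_Ioi)
    refine (ae_restrict_iff' measurableSet_Ioi).mpr (ae_of_all _ fun v hv => ?_)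
    obtain ⟨h1, h2⟩ := hbound v hv
    rw [Real.norm_eq_abs, abs_of_nonneg h1]
    nlinarith
  have hE2 : IntegrableOn (fun v => (θ/v^2) * Real.exp (-(v - θ/v)^2/2)) (Set.Ioi (0:ℝ)) := by
    apply Integrable.mono' htot (hcontE2.aestronglyMeasurable measurableSet_Ioi)
    refine (ae_restrict_iff' measurableSet_Ioi).mpr (ae_of_all _ fun v hv => ?_)
    obtain ⟨h1, h2⟩ := hbound v hv
    rw [Real.norm_eq_abs, abs_of_nonneg (by positivity)]
    nlinarith
  have hsplit : (∫ v in Set.Ioi (0:ℝ), (1 + θ/v^2) * Real.exp (-(v - θ/v)^2/2))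
      = (∫ v in Set.Ioi (0:ℝ), Real.exp (-(v - θ/v)^2/2))
        + ∫ v in Set.Ioi (0:ℝ), (θ/v^2) * Real.exp (-(v - θ/v)^2/2) := by
    rw [← MeasureTheory.integral_add hE hE2]
    congr 1; funext v; ring
  have hJT := J_total hθ
  have hJS := J_swap hθ
  rw [hsplit, hJS] at hJT
  refine ⟨hE, hE2, by linarith, by rw [hJS]; linarith⟩

-- pure algebra identity
lemma alg_id {α β z v sz sD E X : ℝ} (hα : 0 < α) (hβ : 0 < β) (hz : 0 < z) (hv : 0 < v)
    (hsz : sz^2 = z) (hsD : sD^2 = α^2 + z*v^2) (hszp : 0 < sz) (hsDp : 0 < sD) :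
    (2*z^2*α^2*v/(α^2+z*v^2)^2) *
      ((z*α^2/(α^2+z*v^2) * (sz*α/sD))⁻¹ * ((z^2*v^2/(α^2+z*v^2)) * (z*v/sD))⁻¹ * (X * E))
    = (2/(z*sz*α) * X) * E + (2/(z*sz*α) * X * (α/β)) * ((α*β/z)/v^2 * E) := by
  subst hsz
  rw [← hsD]
  have h1 : sz ≠ 0 := ne_of_gt hszp
  have h2 : sD ≠ 0 := ne_of_gt hsDp
  have h3 : α ≠ 0 := ne_of_gt hα
  have h4 : β ≠ 0 := ne_of_gt hβ
  have h5 : v ≠ 0 := ne_of_gt hv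
  field_simp
  linear_combination X*E*hsD

lemma core {α β z : ℝ} (hα : 0 < α) (hβ : 0 < β) (hz : 0 < z) :
    ∫ y in Set.Ioo (0:ℝ) z,
        y ^ (-(3:ℝ)/2) * (z-y) ^ (-(3:ℝ)/2) * Real.exp (-(α^2/(2*y)) - β^2/(2*(z-y)))
    = Real.sqrt (2*π) * (α+β) / (α*β) * z ^ (-(3:ℝ)/2) * Real.exp (-(α+β)^2/(2*z)) := by
  have hθ : 0 < α*β/z := by positivity
  set θ : ℝ := α*β/z with hθdef
  set φ : ℝ → ℝ := fun v => z*α^2/(α^2 + z*v^2) with hφ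
  set φ' : ℝ → ℝ := fun v => -(2*z^2*α^2*v)/(α^2+z*v^2)^2 with hφ'
  have hD : ∀ v : ℝ, 0 < α^2 + z*v^2 := fun v => by positivity
  have hderiv : ∀ v ∈ Set.Ioi (0:ℝ), HasDerivWithinAt φ (φ' v) (Set.Ioi 0) v := by
    intro v hv
    have hu : HasDerivAt (fun v : ℝ => α^2 + z*v^2) (z*(2*v)) v := by
      have := ((hasDerivAt_pow 2 v).const_mul z).const_add (α^2)
      simpa using this
    have h1 := (hasDerivAt_const v (z*α^2)).div hu (hD v).ne'
    have h2 : (0*(α^2+z*v^2) - z*α^2*(z*(2*v)))/(α^2+z*v^2)^2 = φ' v := by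
      simp only [hφ']; congr 1; ring
    exact (h2 ▸ h1).hasDerivWithinAt
  have hinj : Set.InjOn φ (Set.Ioi 0) := by
    intro a ha b hb hab
    have ha0 : (0:ℝ) < a := ha
    have hb0 : (0:ℝ) < b := hb
    simp only [hφ] at hab
    have hda := (hD a).ne'
    have hdb := (hD b).ne'
    field_simp at hab
    have h'' : b^2 = a^2 := mul_left_cancel₀ hz.ne' (by linarith)
    exact ((pow_left_inj₀ hb0.le ha0.le two_ne_zero).mp h'').symm
  have hmem : ∀ v ∈ Set.Ioi (0:ℝ), φ v ∈ Set.Ioo 0 z := by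
    intro v hv
    have hv0 : (0:ℝ) < v := hv
    constructor
    · simp only [hφ]; positivity
    · simp only [hφ]
      rw [div_lt_iff₀ (hD v)]
      have : 0 < z*(z*v^2) := by positivity
      nlinarith
  have himg : φ '' Set.Ioi 0 = Set.Ioo 0 z := by
    apply Set.Subset.antisymm
    · rintro y ⟨v, hv, rfl⟩; exact hmem v hv
    · rintro y ⟨hy1, hy2⟩
      have hzy : 0 < z - y := by linarith
      refine ⟨Real.sqrt (α^2*(z-y)/(y*z)), Real.sqrt_pos.mpr (by positivity), ?_⟩
      have hv2 : Real.sqrt (α^2*(z-y)/(y*z)) ^ 2 = α^2*(z-y)/(y*z) :=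
        Real.sq_sqrt (by positivity)
      simp only [hφ]
      rw [hv2]
      have hDv : α^2 + z*(α^2*(z-y)/(y*z)) = z*α^2/y := by
        field_simp; ring
      rw [hDv]
      field_simp
  have key := integral_image_eq_integral_abs_deriv_smul measurableSet_Ioi hderiv hinj
    (fun y => y ^ (-(3:ℝ)/2) * (z-y) ^ (-(3:ℝ)/2) * Real.exp (-(α^2/(2*y)) - β^2/(2*(z-y))))
  rw [himg] at key
  rw [key]
  set K0 : ℝ := 2/(z*Real.sqrt z*α) * Real.exp (-(α+β)^2/(2*z)) with hK0
  set K1 : ℝ := K0 * (α/β) with hK1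
  have hstep : ∀ v ∈ Set.Ioi (0:ℝ),
      |φ' v| • ((φ v) ^ (-(3:ℝ)/2) * (z - φ v) ^ (-(3:ℝ)/2) *
        Real.exp (-(α^2/(2*(φ v))) - β^2/(2*(z - φ v))))
      = K0 * Real.exp (-(v - θ/v)^2/2) + K1 * ((θ/v^2) * Real.exp (-(v - θ/v)^2/2)) := by
    intro v hv
    have hv0 : (0:ℝ) < v := hv
    obtain ⟨hy1, hy2⟩ := hmem v hv
    have hDv := hD v
    have habs : |φ' v| = 2*z^2*α^2*v/(α^2+z*v^2)^2 := by
      simp only [hφ']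
      rw [neg_div, abs_of_nonpos (neg_nonpos.mpr (by positivity))]; ring
    have hyval : φ v = z*α^2/(α^2+z*v^2) := rfl
    have hzyval : z - φ v = z^2*v^2/(α^2+z*v^2) := by
      rw [hyval]; field_simp; ring
    have hexp : -(α^2/(2*(φ v))) - β^2/(2*(z - φ v))
        = -(α+β)^2/(2*z) + (-(v - θ/v)^2/2) := by
      rw [hyval, hzyval, hθdef]
      field_simp
      ring
    have hs1 : Real.sqrt (z*α^2/(α^2+z*v^2)) = Real.sqrt z*α/Real.sqrt (α^2+z*v^2) := by
      rw [Real.sqrt_div (by positivity), Real.sqrt_mul hz.le, Real.sqrt_sq hα.le]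
    have hs2 : Real.sqrt (z^2*v^2/(α^2+z*v^2)) = z*v/Real.sqrt (α^2+z*v^2) := by
      rw [Real.sqrt_div (by positivity), show z^2*v^2 = (z*v)^2 by ring,
        Real.sqrt_sq (by positivity)]
    rw [rpow_neg_three_half hy1, rpow_neg_three_half (by linarith : (0:ℝ) < z - φ v),
      hexp, Real.exp_add, habs, hyval, hzyval, hs1, hs2]
    rw [hK1, hK0, hθdef]
    simp only [smul_eq_mul]
    exact alg_id hα hβ hz hv0 (Real.sq_sqrt hz.le) (Real.sq_sqrt hDv.le)
      (Real.sqrt_pos.mpr hz) (Real.sqrt_pos.mpr hDv)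
  rw [MeasureTheory.setIntegral_congr_fun measurableSet_Ioi hstep]
  obtain ⟨hI1, hI2, hV1, hV2⟩ := J_all hθ
  rw [MeasureTheory.integral_add (hI1.const_mul K0) (hI2.const_mul K1),
    MeasureTheory.integral_const_mul, MeasureTheory.integral_const_mul, hV1, hV2,
    hK1, hK0, rpow_neg_three_half hz]
  have h1 : Real.sqrt z ≠ 0 := (Real.sqrt_pos.mpr hz).ne'
  field_simp
  ring

theorem ig_density_convolution (c γ s t T : ℝ) (hc : 0 < c) (hγ : 0 < γ) (hs : 0 < s)
    (hst : s < t) (htT : t < T) :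
    ∀ z : ℝ, 0 < z →
      (∫ y in Set.Ioo (0 : ℝ) z, igDensity c γ (T - t) y * igDensity c γ (t - s) (z - y)) =
        igDensity c γ (T - s) z := by
  intro z hz
  have ha : 0 < T - t := by linarith
  have hb : 0 < t - s := by linarith
  have hα : 0 < c * (T - t) := by positivity
  have hβ : 0 < c * (t - s) := by positivity
  have hS2 : Real.sqrt (2*π) ^ 2 = 2*π := Real.sq_sqrt (by positivity)
  have hSpos : 0 < Real.sqrt (2*π) := Real.sqrt_pos.mpr (by positivity)
  set C : ℝ := c^2*(T-t)*(t-s)/(2*π) * Real.exp (γ*c*(T-s) - γ^2*z/2) with hC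
  have hstep : ∀ y ∈ Set.Ioo (0:ℝ) z,
      igDensity c γ (T - t) y * igDensity c γ (t - s) (z - y)
      = C * (y ^ (-(3:ℝ)/2) * (z-y) ^ (-(3:ℝ)/2) *
          Real.exp (-((c*(T-t))^2/(2*y)) - (c*(t-s))^2/(2*(z-y)))) := by
    rintro y ⟨hy1, hy2⟩
    have hzy : 0 < z - y := by linarith
    simp only [igDensity, if_pos hy1, if_pos hzy]
    have hE : Real.exp (-(γ ^ 2 / (2 * y)) * (y - c * (T-t) / γ) ^ 2) *
        Real.exp (-(γ ^ 2 / (2 * (z-y))) * ((z-y) - c * (t-s) / γ) ^ 2)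
        = Real.exp (γ*c*(T-s) - γ^2*z/2) *
          Real.exp (-((c*(T-t))^2/(2*y)) - (c*(t-s))^2/(2*(z-y))) := by
      rw [← Real.exp_add, ← Real.exp_add]
      congr 1
      field_simp
      ring
    calc c * (T - t) / Real.sqrt (2 * π) * y ^ (-(3:ℝ)/2) *
          Real.exp (-(γ ^ 2 / (2 * y)) * (y - c * (T - t) / γ) ^ 2) *
        (c * (t - s) / Real.sqrt (2 * π) * (z - y) ^ (-(3:ℝ)/2) *
          Real.exp (-(γ ^ 2 / (2 * (z - y))) * (z - y - c * (t - s) / γ) ^ 2))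
        = (c^2*(T-t)*(t-s)/(Real.sqrt (2*π)^2)) * (y ^ (-(3:ℝ)/2) * (z-y) ^ (-(3:ℝ)/2)) *
          (Real.exp (-(γ ^ 2 / (2 * y)) * (y - c * (T-t) / γ) ^ 2) *
            Real.exp (-(γ ^ 2 / (2 * (z-y))) * ((z-y) - c * (t-s) / γ) ^ 2)) := by
          ring
      _ = C * (y ^ (-(3:ℝ)/2) * (z-y) ^ (-(3:ℝ)/2) *
          Real.exp (-((c*(T-t))^2/(2*y)) - (c*(t-s))^2/(2*(z-y)))) := by
          rw [hE, hS2, hC]; ring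
  rw [MeasureTheory.setIntegral_congr_fun measurableSet_Ioo hstep,
    MeasureTheory.integral_const_mul, core hα hβ hz]
  simp only [igDensity, if_pos hz]
  have hexp2 : Real.exp (γ*c*(T-s) - γ^2*z/2) *
      Real.exp (-(c*(T-t)+c*(t-s))^2/(2*z))
      = Real.exp (-(γ ^ 2 / (2 * z)) * (z - c * (T-s) / γ) ^ 2) := by
    rw [← Real.exp_add]
    congr 1
    field_simp
    ring
  have hconst : (c^2*(T-t)*(t-s)/(2*π)) *
      (Real.sqrt (2*π)*(c*(T-t)+c*(t-s))/(c*(T-t)*(c*(t-s))))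
      = c*(T-s)/Real.sqrt (2*π) := by
    rw [← hS2, Real.sqrt_sq hSpos.le]
    field_simp
    ring
  calc C * (Real.sqrt (2*π) * (c*(T-t)+c*(t-s)) / (c*(T-t)*(c*(t-s))) *
        z ^ (-(3:ℝ)/2) * Real.exp (-(c*(T-t)+c*(t-s))^2/(2*z)))
      = ((c^2*(T-t)*(t-s)/(2*π)) *
          (Real.sqrt (2*π)*(c*(T-t)+c*(t-s))/(c*(T-t)*(c*(t-s))))) * z ^ (-(3:ℝ)/2) *
        (Real.exp (γ*c*(T-s) - γ^2*z/2) * Real.exp (-(c*(T-t)+c*(t-s))^2/(2*z))) := by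
        rw [hC]; ring
    _ = c * (T - s) / Real.sqrt (2 * π) * z ^ (-(3:ℝ)/2) *
        Real.exp (-(γ ^ 2 / (2 * z)) * (z - c * (T-s) / γ) ^ 2) := by
        rw [hexp2, hconst]
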